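/- Let V be a finite-dimensional complex vector space, A, B alternating bilinear forms on V with B nondegenerate, and P = B^{-1}A the recursion operator (B(P x, y) = A(x, y) for all x, y). Let P = S + N be its Jordan–Chevalley decomposition: S semisimple, N nilpotent, S∘N = N∘S. Define the bilinear form A' by A'(x, y) := B(N x, y). If a subspace L ⊆ V is bi-Lagrangian with respect to the pencil {A + λB}, then L is also bi-Lagrangian with respect to the pencil {A' + λB}. -/

import Mathlib

/-!
Since `B` is nondegenerate, both pencils have rank `dim V`, so being bi-Lagrangian only asks for
bi-isotropy and `2 dim L = dim V`; in particular `L` is its own `B`-orthogonal. Then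
`B(Px, y) = A(x, y) = 0` for `x, y ∈ L` shows that `L` is `P`-invariant. The nilpotent part `N` of
the Jordan–Chevalley decomposition is a polynomial in `P`, so `L` is `N`-invariant too, and
`B(Nx, y) = 0` for `x, y ∈ L`.
-/

open Module LinearMap

variable {V : Type*} [AddCommGroup V] [Module ℂ V]

/-- The rank of a bilinear form: the rank of the induced map `V → V*`. -/
noncomputable def formRank (C : V →ₗ[ℂ] V →ₗ[ℂ] ℂ) : ℕ :=
  Module.finrank ℂ (LinearMap.range C)

/-- The member of the pencil `{A + λB : λ ∈ ℂ ∪ {∞}}` at `λ`; `none` is `λ = ∞`. -/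
noncomputable def pencilForm (A B : V →ₗ[ℂ] V →ₗ[ℂ] ℂ) : Option ℂ → V →ₗ[ℂ] V →ₗ[ℂ] ℂ
  | none => B
  | some l => A + l • B

/-- The rank of the pencil: `max_{λ ∈ ℂ ∪ {∞}} rank (A + λB)`. -/
noncomputable def pencilRank (A B : V →ₗ[ℂ] V →ₗ[ℂ] ℂ) : ℕ :=
  ⨆ l : Option ℂ, formRank (pencilForm A B l)

/-- A subspace `U` is bi-isotropic if both `A` and `B` vanish on `U × U`. -/
def biIsotropic (A B : V →ₗ[ℂ] V →ₗ[ℂ] ℂ) (U : Submodule ℂ V) : Prop :=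
  ∀ u ∈ U, ∀ v ∈ U, A u v = 0 ∧ B u v = 0

/-- An endomorphism is semisimple if every invariant subspace admits an
invariant complement. -/
def IsSemisimpleEnd (S : V →ₗ[ℂ] V) : Prop :=
  ∀ p : Submodule ℂ V, Submodule.map S p ≤ p →
    ∃ q : Submodule ℂ V, Submodule.map S q ≤ q ∧ IsCompl p q

lemma formRank_le_finrank [FiniteDimensional ℂ V] (C : V →ₗ[ℂ] V →ₗ[ℂ] ℂ) :
    formRank C ≤ finrank ℂ V :=
  (Submodule.finrank_le _).trans_eq Subspace.dual_finrank_eq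

lemma formRank_eq_finrank_of_separatingLeft [FiniteDimensional ℂ V]
    {C : V →ₗ[ℂ] V →ₗ[ℂ] ℂ} (hC : C.SeparatingLeft) : formRank C = finrank ℂ V :=
  finrank_range_of_inj <| ker_eq_bot.mp <| separatingLeft_iff_ker_eq_bot.mp hC

lemma pencilRank_eq_finrank [FiniteDimensional ℂ V] (A : V →ₗ[ℂ] V →ₗ[ℂ] ℂ)
    {B : V →ₗ[ℂ] V →ₗ[ℂ] ℂ} (hB : B.SeparatingLeft) : pencilRank A B = finrank ℂ V := by
  have hbdd : BddAbove (Set.range fun l ↦ formRank (pencilForm A B l)) :=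
    ⟨finrank ℂ V, by rintro _ ⟨l, rfl⟩; exact formRank_le_finrank _⟩
  refine le_antisymm (ciSup_le fun l ↦ formRank_le_finrank _) ?_
  calc finrank ℂ V = formRank (pencilForm A B none) :=
        (formRank_eq_finrank_of_separatingLeft hB).symm
    _ ≤ pencilRank A B := le_ciSup hbdd none

lemma IsSemisimpleEnd.isSemisimple {S : V →ₗ[ℂ] V} (hS : IsSemisimpleEnd S) :
    End.IsSemisimple S := by
  simp only [End.isSemisimple_iff, End.mem_invtSubmodule_iff_map_le]
  exact hS

namespace Module.End

lemma mem_invtSubmodule_of_mem_adjoin {R M : Type*} [CommSemiring R] [AddCommMonoid M]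
    [Module R M] {f g : End R M} {p : Submodule R M} (hp : p ∈ f.invtSubmodule)
    (hg : g ∈ Algebra.adjoin R {f}) : p ∈ g.invtSubmodule := by
  induction hg using Algebra.adjoin_induction with
  | mem x hx => rwa [Set.mem_singleton_iff.mp hx]
  | algebraMap r => exact fun x hx ↦ p.smul_mem r hx
  | add x y _ _ hx hy => exact fun v hv ↦ p.add_mem (hx hv) (hy hv)
  | mul x y _ _ hx hy => exact fun v hv ↦ hx (hy hv)

variable {K M : Type*} [Field K] [PerfectField K] [AddCommGroup M] [Module K M]
  [FiniteDimensional K M]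

lemma mem_adjoin_of_isNilpotent_isSemisimple {f n s : End K M} (hn : IsNilpotent n)
    (hs : s.IsSemisimple) (hc : Commute n s) (hf : f = n + s) :
    n ∈ Algebra.adjoin K {f} ∧ s ∈ Algebra.adjoin K {f} := by
  obtain ⟨n₀, hn₀, s₀, hs₀, hn₀_nil, hs₀_ss, hf₀⟩ := f.exists_isNilpotent_isSemisimple
  have hc₀ : Commute n₀ s₀ := Algebra.commute_of_mem_adjoin_singleton_of_commute hs₀
    (Algebra.commute_of_mem_adjoin_self hn₀).symm
  obtain ⟨rfl, rfl⟩ :=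
    isNilpotent_isSemisimple_unique hn hs hn₀_nil hs₀_ss hc hc₀ (hf ▸ hf₀)
  exact ⟨hn₀, hs₀⟩

end Module.End

namespace LinearMap.BilinForm

variable {K M : Type*} [Field K] [AddCommGroup M] [Module K M]

lemma orthogonal_eq_self_of_le_orthogonal [FiniteDimensional K M] {B : LinearMap.BilinForm K M}
    (hB : B.Nondegenerate) {L : Submodule K M} (hL : L ≤ B.orthogonal L)
    (hdim : 2 * finrank K L = finrank K M) : B.orthogonal L = L := by
  refine (Submodule.eq_of_le_of_finrank_le hL ?_).symm
  rw [finrank_orthogonal hB L]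
  omega

lemma mem_invtSubmodule_of_orthogonal_eq_self {A B : LinearMap.BilinForm K M} (hB : B.IsRefl)
    {P : End K M} (hP : ∀ x y, B (P x) y = A x y) {L : Submodule K M}
    (hA : ∀ x ∈ L, ∀ y ∈ L, A x y = 0) (hL : B.orthogonal L = L) : L ∈ P.invtSubmodule := by
  intro x hx
  rw [Submodule.mem_comap, ← hL]
  exact fun y hy ↦ hB _ _ <| (hP x y).trans (hA x hx y hy)

end LinearMap.BilinForm

theorem statement_3_general [FiniteDimensional ℂ V]
    (A B : V →ₗ[ℂ] V →ₗ[ℂ] ℂ) (hBalt : B.IsAlt)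
    (hBnd : ∀ v : V, (∀ w : V, B v w = 0) → v = 0)
    (P S N : V →ₗ[ℂ] V)
    (hP : ∀ x y : V, B (P x) y = A x y)
    (hPSN : P = S + N)
    (hS : IsSemisimpleEnd S)
    (hN : ∃ k : ℕ, N ^ k = 0)
    (hcomm : S ∘ₗ N = N ∘ₗ S)
    (L : Submodule ℂ V)
    (hLiso : biIsotropic A B L)
    (hLdim : 2 * finrank ℂ L + pencilRank A B = 2 * finrank ℂ V) :
    biIsotropic (B ∘ₗ N) B L ∧
      2 * finrank ℂ L + pencilRank (B ∘ₗ N) B = 2 * finrank ℂ V := by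
  have hBrefl : B.IsRefl := hBalt.isRefl
  have hrk : pencilRank A B = finrank ℂ V := pencilRank_eq_finrank A hBnd
  have hrk' : pencilRank (B ∘ₗ N) B = finrank ℂ V := pencilRank_eq_finrank _ hBnd
  have hLperp : BilinForm.orthogonal B L = L :=
    BilinForm.orthogonal_eq_self_of_le_orthogonal
      (hBrefl.nondegenerate_iff_separatingLeft.mpr hBnd)
      (fun v hv u hu ↦ (hLiso u hu v hv).2) (by omega)
  have hPL : L ∈ End.invtSubmodule P :=
    BilinForm.mem_invtSubmodule_of_orthogonal_eq_self hBrefl hP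
      (fun x hx y hy ↦ (hLiso x hx y hy).1) hLperp
  have hNP : N ∈ Algebra.adjoin ℂ {P} :=
    (End.mem_adjoin_of_isNilpotent_isSemisimple hN hS.isSemisimple (hcomm.symm : N * S = S * N)
      (hPSN.trans (add_comm S N))).1
  have hNL : L ∈ End.invtSubmodule N := End.mem_invtSubmodule_of_mem_adjoin hPL hNP
  exact ⟨fun u hu v hv ↦ ⟨(hLiso (N u) (hNL hu) v hv).2, (hLiso u hu v hv).2⟩, by omega⟩

/-- For `B` nondegenerate, `P = B⁻¹A` with Jordan–Chevalley
decomposition `P = S + N` (`S` semisimple, `N` nilpotent, commuting), and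
`A'(x,y) = B(Nx,y)` (i.e. `A' = B ∘ₗ N`): any subspace `L` bi-Lagrangian w.r.t.
`{A + λB}` is bi-Lagrangian w.r.t. `{A' + λB}`. Bi-Lagrangian is encoded as
bi-isotropic together with `2·dim L + rk 𝓛 = 2·dim V`. -/
theorem statement_3 [FiniteDimensional ℂ V]
    (A B : V →ₗ[ℂ] V →ₗ[ℂ] ℂ) (hAalt : A.IsAlt) (hBalt : B.IsAlt)
    (hBnd : ∀ v : V, (∀ w : V, B v w = 0) → v = 0)
    (P S N : V →ₗ[ℂ] V)
    (hP : ∀ x y : V, B (P x) y = A x y)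
    (hPSN : P = S + N)
    (hS : IsSemisimpleEnd S)
    (hN : ∃ k : ℕ, N ^ k = 0)
    (hcomm : S ∘ₗ N = N ∘ₗ S)
    (L : Submodule ℂ V)
    (hLiso : biIsotropic A B L)
    (hLdim : 2 * finrank ℂ L + pencilRank A B = 2 * finrank ℂ V) :
    biIsotropic (B ∘ₗ N) B L ∧
      2 * finrank ℂ L + pencilRank (B ∘ₗ N) B = 2 * finrank ℂ V :=
  statement_3_general A B hBalt hBnd P S N hP hPSN hS hN hcomm L hLiso hLdim
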